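/- arXiv:1105.4458 — 2 statements merged into one kernel-verified Lean document; each statement's English description precedes it below -/
import Mathlib

section
/- Let a, c be nonnegative integers. Then in A one has E1^{(a)} E2^{(a+c)} E1^{(c)} = E2^{(c)} E1^{(a+c)} E2^{(a)}. -/
/-!
The Serre relations say exactly that `z = E₁E₂ - q⁻¹E₂E₁` q-commutes with both generators:
`E₁z = q zE₁` and `zE₂ = q E₂z`. From this one gets the normal-ordering formula
`E₁⁽ᵃ⁾E₂⁽ᵃ⁺ʷ⁾ = ∑_{i+t=a} q^{-i(i+w)} E₂⁽ⁱ⁺ʷ⁾z⁽ᵗ⁾E₁⁽ⁱ⁾` (by induction on `a`, using the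
q-Pascal rule `[i+t] = q^{-t}[i] + q^i[t]`) and, in the opposite algebra, its mirror image
`E₁⁽ᵃ⁺ʷ⁾E₂⁽ᵃ⁾ = ∑_{i+t=a} q^{-i(i+w)} E₂⁽ⁱ⁾z⁽ᵗ⁾E₁⁽ⁱ⁺ʷ⁾`. Expanding `E₁⁽ᵃ⁾E₂⁽ᵃ⁺ᶜ⁾` by the first and
`E₁⁽ᵃ⁺ᶜ⁾E₂⁽ᵃ⁾` by the second, both sides of the identity become the same sum, since
`E⁽ᵐ⁾E⁽ⁿ⁾ = [m+n choose n] E⁽ᵐ⁺ⁿ⁾` with a coefficient symmetric in `m` and `n`.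
-/

open Finset

noncomputable section

/-- The field ℚ(q) of rational functions over ℚ. -/
abbrev Qq : Type := RatFunc ℚ

/-- The balanced quantum integer [n] = ∑_{i=0}^{n-1} q^{n-1-2i}, viewed in ℚ(q). -/
noncomputable def qint (n : ℕ) : Qq :=
  ∑ i ∈ Finset.range n, (RatFunc.X : Qq) ^ ((n : ℤ) - 1 - 2 * (i : ℤ))

/-- The quantum factorial [n]! = [n][n-1]⋯[1], with [0]! = 1. -/
noncomputable def qfact : ℕ → Qq
  | 0 => 1
  | n + 1 => qfact n * qint (n + 1)

/-- The balanced quantum binomial coefficient [m choose k] = [m]!/([k]![m-k]!). -/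
noncomputable def qbinom (m k : ℕ) : Qq := qfact m / (qfact k * qfact (m - k))

/-- The divided power E^{(a)} = E^a / [a]!. -/
noncomputable def dp {A : Type*} [Ring A] [Module Qq A] (E : A) (a : ℕ) : A :=
  (qfact a)⁻¹ • E ^ a

namespace QuantumSerre

local notation "q" => (RatFunc.X : Qq)

lemma q_ne_zero : q ≠ 0 := RatFunc.X_ne_zero

lemma qint_zero : qint 0 = 0 := by simp [qint]

lemma qint_add (m n : ℕ) : qint (m + n) = q ^ n * qint m + q⁻¹ ^ m * qint n := by
  simp only [qint, Finset.sum_range_add, Finset.mul_sum]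
  congr 1 <;> refine Finset.sum_congr rfl fun i _ => ?_
  · rw [← zpow_natCast, ← zpow_add₀ q_ne_zero]
    congr 1; push_cast; ring
  · rw [inv_pow, ← zpow_natCast, ← zpow_neg, ← zpow_add₀ q_ne_zero]
    congr 1; push_cast; ring

lemma qint_one : qint 1 = 1 := by simp [qint]

lemma qint_two : qint 2 = q + q⁻¹ := by
  simp [qint, Finset.sum_range_succ]

lemma qint_ne_zero {n : ℕ} (hn : n ≠ 0) : qint n ≠ 0 := by
  set p : Polynomial ℚ := ∑ i ∈ Finset.range n, Polynomial.X ^ (2 * (n - 1 - i))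
  have hp : p ≠ 0 := fun h => by
    simpa [p, Polynomial.eval_finsetSum, hn] using congrArg (Polynomial.eval 1) h
  have hq : q ^ (n - 1) * qint n = algebraMap (Polynomial ℚ) Qq p := by
    simp only [p, qint, map_sum, map_pow, RatFunc.algebraMap_X, Finset.mul_sum]
    refine Finset.sum_congr rfl fun i hi => ?_
    rw [Finset.mem_range] at hi
    rw [← zpow_natCast, ← zpow_natCast, ← zpow_add₀ q_ne_zero]
    congr 1
    omega
  intro h0
  rw [h0, mul_zero, eq_comm,
    map_eq_zero_iff _ (IsFractionRing.injective (Polynomial ℚ) Qq)] at hq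
  exact hp hq

lemma qfact_ne_zero (n : ℕ) : qfact n ≠ 0 := by
  induction n with
  | zero => exact one_ne_zero
  | succ n ih => exact mul_ne_zero ih (qint_ne_zero n.succ_ne_zero)

lemma qbinom_symm_add (m n : ℕ) : qbinom (m + n) m = qbinom (m + n) n := by
  rw [qbinom, qbinom, Nat.add_sub_cancel_left, Nat.add_sub_cancel, mul_comm]

section DividedPowers

variable {A : Type*} [Ring A] [Algebra Qq A]

lemma dp_zero (E : A) : dp E 0 = 1 := by simp [dp, qfact]

lemma dp_mul_self (E : A) (n : ℕ) : dp E n * E = qint (n + 1) • dp E (n + 1) := by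
  rw [dp, dp, smul_mul_assoc, ← pow_succ, smul_smul, qfact, mul_inv, mul_left_comm,
    mul_inv_cancel₀ (qint_ne_zero n.succ_ne_zero), mul_one]

lemma dp_mul_dp (E : A) (m n : ℕ) : dp E m * dp E n = qbinom (m + n) n • dp E (m + n) := by
  rw [dp, dp, dp, smul_mul_smul_comm, ← pow_add, smul_smul, qbinom, Nat.add_sub_cancel]
  have := qfact_ne_zero m
  have := qfact_ne_zero n
  have := qfact_ne_zero (m + n)
  congr 1
  field_simp

lemma pow_mul_of_mul_eq_smul {R : Type*} [CommSemiring R] {B : Type*} [Semiring B] [Algebra R B]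
    {c : R} {x y : B} (h : x * y = c • (y * x)) (n : ℕ) : x ^ n * y = c ^ n • (y * x ^ n) := by
  induction n with
  | zero => simp
  | succ n ih =>
    rw [pow_succ, mul_assoc, h, mul_smul_comm, ← mul_assoc, ih, smul_mul_assoc, smul_smul,
      mul_assoc, ← pow_succ', ← pow_succ]

lemma dp_mul_of_mul_eq_smul {c : Qq} {x y : A} (h : x * y = c • (y * x)) (n : ℕ) :
    dp x n * y = c ^ n • (y * dp x n) := by
  rw [dp, smul_mul_assoc, pow_mul_of_mul_eq_smul h, mul_smul_comm, smul_comm]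

lemma dp_op (E : A) (n : ℕ) : dp (MulOpposite.op E) n = MulOpposite.op (dp E n) := by
  rw [dp, dp, MulOpposite.op_smul, MulOpposite.op_pow]

end DividedPowers

section QCommTriple

variable {A : Type*} [Ring A] [Algebra Qq A]

structure IsQCommTriple (x y z : A) : Prop where
  left : x * z = q • (z * x)
  right : z * y = q • (y * z)
  mul : x * y = z + q⁻¹ • (y * x)

open MulOpposite in
lemma IsQCommTriple.op {x y z : A} (h : IsQCommTriple x y z) :
    IsQCommTriple (op y) (op x) (op z) where
  left := by rw [← op_mul, ← op_mul, h.right, op_smul]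
  right := by rw [← op_mul, ← op_mul, h.left, op_smul]
  mul := by rw [← op_mul, ← op_mul, h.mul, op_add, op_smul]

lemma isQCommTriple_of_serre {x y : A}
    (hx : x ^ 2 * y + y * x ^ 2 = qint 2 • (x * y * x))
    (hy : y ^ 2 * x + x * y ^ 2 = qint 2 • (y * x * y)) :
    IsQCommTriple x y (x * y - q⁻¹ • (y * x)) where
  left := by
    rw [qint_two, add_smul] at hx
    simp only [mul_sub, sub_mul, smul_sub, mul_smul_comm, smul_mul_assoc, smul_smul,
      mul_inv_cancel₀ q_ne_zero, one_smul, sub_eq_sub_iff_add_eq_add, ← mul_assoc]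
    rw [← hx]
    noncomm_ring
  right := by
    rw [qint_two, add_smul] at hy
    simp only [mul_sub, sub_mul, smul_sub, mul_smul_comm, smul_mul_assoc, smul_smul,
      mul_inv_cancel₀ q_ne_zero, one_smul, sub_eq_sub_iff_add_eq_add, ← mul_assoc]
    rw [← hy]
    noncomm_ring
  mul := by rw [sub_add_cancel]

end QCommTriple

namespace IsQCommTriple

variable {A : Type*} [Ring A] [Algebra Qq A] {x y z : A}

lemma mul_pow_succ (h : IsQCommTriple x y z) (n : ℕ) :
    x * y ^ (n + 1) = q⁻¹ ^ (n + 1) • (y ^ (n + 1) * x) + qint (n + 1) • (y ^ n * z) := by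
  induction n with
  | zero => simp [h.mul, qint, add_comm]
  | succ n ih =>
    have hq : qint (n + 1 + 1) = q * qint (n + 1) + q⁻¹ ^ (n + 1) := by
      rw [qint_add, pow_one, qint_one, mul_one]
    calc x * y ^ (n + 1 + 1)
        = q⁻¹ ^ (n + 1) • (y ^ (n + 1) * (x * y)) + qint (n + 1) • (y ^ n * (z * y)) := by
          rw [pow_succ y (n + 1), ← mul_assoc, ih]
          simp only [add_mul, smul_mul_assoc, mul_assoc]
      _ = q⁻¹ ^ (n + 1 + 1) • (y ^ (n + 1 + 1) * x) + qint (n + 1 + 1) • (y ^ (n + 1) * z) := by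
          rw [h.mul, h.right, hq]
          simp only [mul_add, mul_smul_comm, ← mul_assoc, ← pow_succ]
          rw [smul_add, smul_smul, ← pow_succ, smul_smul, add_smul, mul_comm (qint _)]
          abel

lemma mul_dp_succ (h : IsQCommTriple x y z) (n : ℕ) :
    x * dp y (n + 1) = q⁻¹ ^ (n + 1) • (dp y (n + 1) * x) + dp y n * z := by
  have hfact : (qfact (n + 1))⁻¹ * qint (n + 1) = (qfact n)⁻¹ := by
    rw [qfact, mul_inv, mul_assoc, inv_mul_cancel₀ (qint_ne_zero n.succ_ne_zero), mul_one]
  simp only [dp, mul_smul_comm, smul_mul_assoc, h.mul_pow_succ, ← hfact]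
  rw [smul_add, smul_comm, smul_smul, smul_smul]

lemma mul_dp_mul_self (h : IsQCommTriple x y z) (u : A) (i t : ℕ) :
    u * dp z t * dp x i * z = (q ^ i * qint (t + 1)) • (u * dp z (t + 1) * dp x i) := by
  rw [mul_assoc, dp_mul_of_mul_eq_smul h.left, mul_smul_comm, ← mul_assoc, mul_assoc u,
    dp_mul_self, mul_smul_comm, smul_mul_assoc, smul_smul]

lemma dp_mul_dp_add (h : IsQCommTriple x y z) (a w : ℕ) :
    dp x a * dp y (a + w) = ∑ p ∈ antidiagonal a,
      q⁻¹ ^ (p.1 * (p.1 + w)) • (dp y (p.1 + w) * dp z p.2 * dp x p.1) := by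
  induction a generalizing w with
  | zero => simp [dp_zero]
  | succ a ih =>
    set M : ℕ × ℕ → A := fun p => dp y (p.1 + w) * dp z p.2 * dp x p.1
    set c : ℕ × ℕ → Qq := fun p => q⁻¹ ^ (p.1 * (p.1 + w))
    apply smul_right_injective A (qint_ne_zero a.succ_ne_zero)
    have hx : ∀ p ∈ antidiagonal a, q⁻¹ ^ (a + w + 1) •
        (q⁻¹ ^ (p.1 * (p.1 + (w + 1))) • (dp y (p.1 + (w + 1)) * dp z p.2 * dp x p.1) * x) =
        (q⁻¹ ^ p.2 * qint (p.1 + 1) * c (p.1 + 1, p.2)) • M (p.1 + 1, p.2) := by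
      rintro ⟨i, t⟩ hp
      rw [HasAntidiagonal.mem_antidiagonal] at hp
      subst hp
      simp only [M, c, smul_mul_assoc, mul_assoc _ (dp x i), dp_mul_self, mul_smul_comm, smul_smul,
        ← mul_assoc, Nat.add_right_comm i 1 w, ← add_assoc i w 1]
      congr 1
      ring
    have hz : ∀ p ∈ antidiagonal a, q⁻¹ ^ (p.1 * (p.1 + w)) •
        (dp y (p.1 + w) * dp z p.2 * dp x p.1) * z =
        (q ^ p.1 * qint (p.2 + 1) * c (p.1, p.2 + 1)) • M (p.1, p.2 + 1) := by
      rintro ⟨i, t⟩ -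
      simp only [M, c, smul_mul_assoc, h.mul_dp_mul_self, smul_smul, mul_comm]
    have hpascal : ∀ p ∈ antidiagonal (a + 1),
        (q⁻¹ ^ p.2 * qint p.1 * c p) • M p + (q ^ p.1 * qint p.2 * c p) • M p =
        qint (a + 1) • (c p • M p) := by
      rintro ⟨i, t⟩ hp
      rw [HasAntidiagonal.mem_antidiagonal] at hp
      rw [← hp, add_comm i t, qint_add, ← add_smul, smul_smul]
      congr 1
      ring
    calc qint (a + 1) • (dp x (a + 1) * dp y (a + 1 + w))
        = q⁻¹ ^ (a + w + 1) • (dp x a * dp y (a + (w + 1)) * x) + dp x a * dp y (a + w) * z := by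
          rw [← smul_mul_assoc, ← dp_mul_self, mul_assoc, Nat.add_right_comm, h.mul_dp_succ,
            mul_add, mul_smul_comm, ← mul_assoc, ← mul_assoc, ← add_assoc]
      _ = ∑ p ∈ antidiagonal a,
              (q⁻¹ ^ p.2 * qint (p.1 + 1) * c (p.1 + 1, p.2)) • M (p.1 + 1, p.2) +
            ∑ p ∈ antidiagonal a,
              (q ^ p.1 * qint (p.2 + 1) * c (p.1, p.2 + 1)) • M (p.1, p.2 + 1) := by
          rw [ih, ih, sum_mul, sum_mul, smul_sum, sum_congr rfl hx, sum_congr rfl hz]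
      _ = ∑ p ∈ antidiagonal (a + 1),
            ((q⁻¹ ^ p.2 * qint p.1 * c p) • M p + (q ^ p.1 * qint p.2 * c p) • M p) := by
          rw [sum_add_distrib, Nat.sum_antidiagonal_succ, Nat.sum_antidiagonal_succ']
          simp [qint_zero]
      _ = qint (a + 1) • ∑ p ∈ antidiagonal (a + 1), c p • M p := by
          rw [sum_congr rfl hpascal, smul_sum]

lemma dp_add_mul_dp (h : IsQCommTriple x y z) (a w : ℕ) :
    dp x (a + w) * dp y a = ∑ p ∈ antidiagonal a,
      q⁻¹ ^ (p.1 * (p.1 + w)) • (dp y p.1 * dp z p.2 * dp x (p.1 + w)) := by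
  apply MulOpposite.op_injective
  simp only [MulOpposite.op_mul, Finset.op_sum, MulOpposite.op_smul, ← dp_op,
    h.op.dp_mul_dp_add, mul_assoc]

end IsQCommTriple

end QuantumSerre

open QuantumSerre

/-- E1^{(a)} E2^{(a+c)} E1^{(c)} = E2^{(c)} E1^{(a+c)} E2^{(a)}. -/
theorem stmt_1 (A : Type*) [Ring A] [Algebra Qq A] (E1 E2 : A)
    (hs1 : E1 ^ 2 * E2 + E2 * E1 ^ 2 = qint 2 • (E1 * E2 * E1))
    (hs2 : E2 ^ 2 * E1 + E1 * E2 ^ 2 = qint 2 • (E2 * E1 * E2))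
    (a c : ℕ) :
    dp E1 a * dp E2 (a + c) * dp E1 c = dp E2 c * dp E1 (a + c) * dp E2 a := by
  have h := isQCommTriple_of_serre hs1 hs2
  rw [h.dp_mul_dp_add, mul_assoc, h.dp_add_mul_dp, sum_mul, mul_sum]
  refine sum_congr rfl fun p _ => ?_
  rw [smul_mul_assoc, mul_assoc, dp_mul_dp, mul_smul_comm, mul_smul_comm, ← mul_assoc,
    ← mul_assoc, dp_mul_dp, smul_mul_assoc, smul_mul_assoc, smul_smul, smul_smul, add_comm c,
    qbinom_symm_add, mul_comm]
end
end

section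
/- Higher quantum Serre relations: let m, n be integers with m > n > 0 and let ε ∈ {+1, −1}. Then in A one has ∑_{r=0}^{m} (−1)^r q^{ε(m−n−1)r} · E1^{(m−r)} E2^{(n)} E1^{(r)} = 0, where q denotes the image of the variable q in ℚ(q). The same identity holds with the roles of E1 and E2 interchanged. -/
open Finset

noncomputable section

/-!
Let `D_s x = E₁ x - v ^ s x E₁` with `v = q` or `v = q⁻¹`. Left and right multiplication by `E₁`
commute, and `[a + b] = v ^ (-b) [a] + v ^ a [b]`, so a q-binomial theorem gives
`∑_r (-1)^r v^{c r} E₁^{(m-r)} x E₁^{(r)} = ([m]!)⁻¹ D_{c-m+1} ⋯ D_{c+m-3} D_{c+m-1} x`.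
For `Y = E₁ E₂ - v E₂ E₁` the Serre relations say `Y E₁ = v E₁ Y` and `E₂ Y = v Y E₂`; hence
`D_{i-j}` sends `E₂^i Y^j` to a multiple of `E₂^(i-1) Y^(j+1)` and `D_{-j} Y^j = 0`, so
`D_{-n} ⋯ D_{n-2} D_n` kills `E₂^n`. With `c = n + 1 - m` these are the first `n + 1` operators
applied, and the exponent `ε (m - n - 1)` of the theorem is this `c` for `v = q ^ (-ε)`.
-/

section QAd

variable {K A : Type*} [Field K] [Ring A] [Algebra K A]

def qAd (v : K) (E : A) (s : ℤ) : A →ₗ[K] A :=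
  LinearMap.mulLeft K E - v ^ s • LinearMap.mulRight K E

theorem qAd_apply (v : K) (E : A) (s : ℤ) (x : A) : qAd v E s x = E * x - v ^ s • (x * E) :=
  rfl

def qAdChain (v : K) (E : A) : ℕ → ℤ → A →ₗ[K] A
  | 0, _ => LinearMap.id
  | k + 1, s => qAdChain v E k (s - 2) ∘ₗ qAd v E s

variable {v : K} {E1 E2 Y : A}

theorem pow_mul_eq_smul_mul_pow (hYE1 : Y * E1 = v • (E1 * Y)) (k : ℕ) :
    Y ^ k * E1 = v ^ k • (E1 * Y ^ k) := by
  induction k with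
  | zero => simp
  | succ k ih =>
    rw [pow_succ, mul_assoc, hYE1, mul_smul_comm, ← mul_assoc, ih, smul_mul_assoc, smul_smul,
      mul_assoc, ← pow_succ, ← pow_succ']

theorem qAd_neg_pow_eq_zero (hv : v ≠ 0) (hYE1 : Y * E1 = v • (E1 * Y)) (k : ℕ) :
    qAd v E1 (-k) (Y ^ k) = 0 := by
  rw [qAd_apply, pow_mul_eq_smul_mul_pow hYE1, smul_smul, zpow_neg, zpow_natCast,
    inv_mul_cancel₀ (pow_ne_zero k hv), one_smul, sub_self]

theorem exists_mul_pow_succ (hv : v ≠ 0) (hY : E1 * E2 = v • (E2 * E1) + Y)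
    (hE2Y : E2 * Y = v • (Y * E2)) (i : ℕ) :
    ∃ a : K, E1 * E2 ^ (i + 1) = v ^ (i + 1) • (E2 ^ (i + 1) * E1) + a • (E2 ^ i * Y) := by
  induction i with
  | zero => exact ⟨1, by simp [hY]⟩
  | succ i ih =>
    obtain ⟨a, ha⟩ := ih
    have hYE2 : Y * E2 = v⁻¹ • (E2 * Y) := by rw [hE2Y, inv_smul_smul₀ hv]
    refine ⟨v ^ (i + 1) + a * v⁻¹, ?_⟩
    calc E1 * E2 ^ (i + 2) = (E1 * E2 ^ (i + 1)) * E2 := by rw [mul_assoc, ← pow_succ]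
      _ = v ^ (i + 1) • (E2 ^ (i + 1) * (E1 * E2)) + a • (E2 ^ i * (Y * E2)) := by
        rw [ha, add_mul, smul_mul_assoc, smul_mul_assoc, mul_assoc, mul_assoc]
      _ = _ := by
        rw [hY, hYE2, mul_add, mul_smul_comm, mul_smul_comm, ← mul_assoc, ← mul_assoc,
          ← pow_succ, ← pow_succ]
        module

theorem exists_qAd_pow_mul_pow (hv : v ≠ 0) (hY : E1 * E2 = v • (E2 * E1) + Y)
    (hYE1 : Y * E1 = v • (E1 * Y)) (hE2Y : E2 * Y = v • (Y * E2)) (i j : ℕ) :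
    ∃ a : K, qAd v E1 ((i : ℤ) + 1 - j) (E2 ^ (i + 1) * Y ^ j) = a • (E2 ^ i * Y ^ (j + 1)) := by
  obtain ⟨a, ha⟩ := exists_mul_pow_succ hv hY hE2Y i
  have hE1Y : E1 * Y ^ j = v ^ (-(j : ℤ)) • (Y ^ j * E1) := by
    rw [pow_mul_eq_smul_mul_pow hYE1, smul_smul, zpow_neg, zpow_natCast,
      inv_mul_cancel₀ (pow_ne_zero j hv), one_smul]
  have hexp : v ^ ((i : ℤ) + 1 - j) = v ^ (i + 1) * v ^ (-(j : ℤ)) := by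
    rw [sub_eq_add_neg, zpow_add₀ hv]; norm_cast
  refine ⟨a, ?_⟩
  rw [qAd_apply, ← mul_assoc, ha, add_mul, smul_mul_assoc, smul_mul_assoc, mul_assoc, hE1Y,
    mul_assoc, mul_assoc, ← pow_succ', mul_smul_comm, smul_smul, ← hexp, add_sub_cancel_left]

theorem qAdChain_pow_mul_pow_eq_zero (hv : v ≠ 0) (hY : E1 * E2 = v • (E2 * E1) + Y)
    (hYE1 : Y * E1 = v • (E1 * Y)) (hE2Y : E2 * Y = v • (Y * E2)) {i k : ℕ} (hik : i < k)
    (j : ℕ) : qAdChain v E1 k (i - j) (E2 ^ i * Y ^ j) = 0 := by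
  obtain ⟨k, rfl⟩ : ∃ k', k = k' + 1 := ⟨k - 1, by omega⟩
  induction i generalizing k j with
  | zero =>
    rw [qAdChain, LinearMap.comp_apply, pow_zero, one_mul, Nat.cast_zero, zero_sub,
      qAd_neg_pow_eq_zero hv hYE1, map_zero]
  | succ i ih =>
    obtain ⟨a, ha⟩ := exists_qAd_pow_mul_pow hv hY hYE1 hE2Y i j
    obtain ⟨k, rfl⟩ : ∃ k', k = k' + 1 := ⟨k - 1, by omega⟩
    have hexp : ((i + 1 : ℕ) : ℤ) - j - 2 = i - (j + 1 : ℕ) := by push_cast; ring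
    rw [qAdChain, LinearMap.comp_apply, Nat.cast_succ, ha, map_smul, ← Nat.cast_succ, hexp,
      ih (j + 1) k (by omega), smul_zero]

theorem qComm_mul_eq_of_serre (hv : v ≠ 0)
    (hs : E1 ^ 2 * E2 + E2 * E1 ^ 2 = (v + v⁻¹) • (E1 * E2 * E1)) :
    (E1 * E2 - v • (E2 * E1)) * E1 = v • (E1 * (E1 * E2 - v • (E2 * E1))) := by
  have hs' : v • (E1 ^ 2 * E2 + E2 * E1 ^ 2) = (v ^ 2 + 1) • (E1 * E2 * E1) := by
    rw [hs, smul_smul, mul_add, mul_inv_cancel₀ hv, sq]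
  simp only [sq, mul_assoc, mul_sub, sub_mul, smul_mul_assoc, mul_smul_comm] at hs' ⊢
  linear_combination (norm := module) (-1 : K) • hs'

theorem mul_qComm_eq_of_serre (hv : v ≠ 0)
    (hs : E2 ^ 2 * E1 + E1 * E2 ^ 2 = (v + v⁻¹) • (E2 * E1 * E2)) :
    E2 * (E1 * E2 - v • (E2 * E1)) = v • ((E1 * E2 - v • (E2 * E1)) * E2) := by
  have hs' : v • (E2 ^ 2 * E1 + E1 * E2 ^ 2) = (v ^ 2 + 1) • (E2 * E1 * E2) := by
    rw [hs, smul_smul, mul_add, mul_inv_cancel₀ hv, sq]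
  simp only [sq, mul_assoc, mul_sub, sub_mul, smul_mul_assoc, mul_smul_comm] at hs' ⊢
  linear_combination (norm := module) (-1 : K) • hs'

theorem qAdChain_pow_eq_zero_of_serre (hv : v ≠ 0)
    (hs1 : E1 ^ 2 * E2 + E2 * E1 ^ 2 = (v + v⁻¹) • (E1 * E2 * E1))
    (hs2 : E2 ^ 2 * E1 + E1 * E2 ^ 2 = (v + v⁻¹) • (E2 * E1 * E2)) {n k : ℕ} (hnk : n < k) :
    qAdChain v E1 k n (E2 ^ n) = 0 := by
  simpa using qAdChain_pow_mul_pow_eq_zero hv (by abel) (qComm_mul_eq_of_serre hv hs1)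
    (mul_qComm_eq_of_serre hv hs2) hnk 0

end QAd

local notation "𝐪" => (RatFunc.X : Qq)

theorem ne_zero_of_eq_or {v : Qq} (hv : v = 𝐪 ∨ v = 𝐪⁻¹) : v ≠ 0 := by
  rcases hv with rfl | rfl <;> simp [RatFunc.X_ne_zero]

theorem qint_zero : qint 0 = 0 := by simp [qint]

theorem qint_add (a b : ℕ) : qint (a + b) = 𝐪 ^ (b : ℤ) * qint a + 𝐪 ^ (-(a : ℤ)) * qint b := by
  simp only [qint, mul_sum, sum_range_add]
  congr 1 <;> refine sum_congr rfl fun i _ => ?_ <;> rw [← zpow_add₀ RatFunc.X_ne_zero] <;>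
    push_cast <;> ring_nf

theorem qint_add_of_eq_or {v : Qq} (hv : v = 𝐪 ∨ v = 𝐪⁻¹) (a b : ℕ) :
    qint (a + b) = v ^ (-(b : ℤ)) * qint a + v ^ (a : ℤ) * qint b := by
  rcases hv with rfl | rfl
  · rw [add_comm, qint_add, add_comm]
  · rw [qint_add, inv_zpow', inv_zpow', neg_neg]

theorem qint_ne_zero {n : ℕ} (hn : n ≠ 0) : qint n ≠ 0 := by
  set p : Polynomial ℚ := ∑ i ∈ range n, Polynomial.X ^ (2 * (n - 1 - i))
  have hp : p.eval 1 = n := by simp [p, Polynomial.eval_finsetSum]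
  have hqint : 𝐪 ^ ((n : ℤ) - 1) * qint n = algebraMap (Polynomial ℚ) Qq p := by
    simp only [qint, p, mul_sum, map_sum, map_pow, RatFunc.algebraMap_X]
    refine sum_congr rfl fun i hi => ?_
    rw [mem_range] at hi
    have hexp : ((2 * (n - 1 - i) : ℕ) : ℤ) = (n - 1) + (n - 1 - 2 * i) := by omega
    rw [← zpow_add₀ RatFunc.X_ne_zero, ← zpow_natCast, hexp]
  intro h
  rw [h, mul_zero, eq_comm, map_eq_zero_iff _ (IsFractionRing.injective _ _)] at hqint
  simp only [hqint, Polynomial.eval_zero] at hp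
  exact hn (by exact_mod_cast hp.symm)

theorem qfact_ne_zero (n : ℕ) : qfact n ≠ 0 := by
  induction n with
  | zero => simp [qfact]
  | succ n ih => exact mul_ne_zero ih (qint_ne_zero n.succ_ne_zero)

section Algebra

variable {A : Type*} [Ring A] [Algebra Qq A]

theorem dp_zero (E : A) : dp E 0 = 1 := by simp [dp, qfact]

theorem dp_mul_self (E : A) (a : ℕ) : dp E a * E = qint (a + 1) • dp E (a + 1) := by
  unfold dp
  rw [qfact, smul_smul, mul_inv, mul_left_comm, mul_inv_cancel₀ (qint_ne_zero a.succ_ne_zero),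
    mul_one, smul_mul_assoc, ← pow_succ]

theorem self_mul_dp (E : A) (a : ℕ) : E * dp E a = qint (a + 1) • dp E (a + 1) := by
  rw [← dp_mul_self]
  unfold dp
  rw [smul_mul_assoc, mul_smul_comm, ← pow_succ, ← pow_succ']

def qSerreSum (v : Qq) (E x : A) (m : ℕ) (c : ℤ) : A :=
  ∑ r ∈ range (m + 1), ((-1 : Qq) ^ r * v ^ (c * r)) • (dp E (m - r) * x * dp E r)

theorem qint_smul_qSerreSum_succ {v : Qq} (hv : v = 𝐪 ∨ v = 𝐪⁻¹) (E x : A) (m : ℕ) (c : ℤ) :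
    qint (m + 1) • qSerreSum v E x (m + 1) c = qSerreSum v E (qAd v E (c + m) x) m (c - 1) := by
  have hv0 := ne_zero_of_eq_or hv
  set t : ℕ → A := fun r => dp E (m + 1 - r) * x * dp E r
  set a : ℕ → Qq := fun r => (-1) ^ r * v ^ ((c - 1) * r) * qint (m + 1 - r)
  set b : ℕ → Qq := fun r => (-1) ^ r * v ^ ((c - 1) * r + m + 1) * qint r
  have hcoeff : ∀ r ∈ range (m + 2), a r + b r = qint (m + 1) * ((-1) ^ r * v ^ (c * r)) := by
    intro r hr
    rw [mem_range] at hr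
    have h1 : v ^ ((c - 1) * r) = v ^ (-(r : ℤ)) * v ^ (c * r) := by
      rw [← zpow_add₀ hv0]; ring_nf
    have h2 : v ^ ((c - 1) * r + m + 1) = v ^ ((m + 1 - r : ℕ) : ℤ) * v ^ (c * r) := by
      rw [← zpow_add₀ hv0]; push_cast [Nat.cast_sub (by omega : r ≤ m + 1)]; ring_nf
    rw [show m + 1 = (m + 1 - r) + r by omega, qint_add_of_eq_or hv]
    simp only [a, b]
    rw [h1, h2]
    ring
  have hterm : ∀ r ∈ range (m + 1), ((-1 : Qq) ^ r * v ^ ((c - 1) * r)) •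
      (dp E (m - r) * qAd v E (c + m) x * dp E r) = a r • t r + b (r + 1) • t (r + 1) := by
    intro r hr
    rw [mem_range] at hr
    have hw : v ^ ((c - 1) * r) * v ^ (c + m) = v ^ ((c - 1) * (r + 1 : ℕ) + m + 1) := by
      rw [← zpow_add₀ hv0]; push_cast; ring_nf
    have hl : dp E (m - r) * E = qint (m + 1 - r) • dp E (m + 1 - r) := by
      rw [dp_mul_self, show m - r + 1 = m + 1 - r by omega]
    simp only [qAd_apply, t, mul_sub (dp E (m - r)), sub_mul _ _ (dp E r), mul_smul_comm,
      smul_mul_assoc, mul_assoc, self_mul_dp, show m + 1 - (r + 1) = m - r by omega]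
    rw [← mul_assoc (dp E (m - r)) E, hl]
    simp only [smul_mul_assoc, a, b, ← hw]
    rw [smul_sub, smul_smul, smul_smul, smul_smul, sub_eq_add_neg, ← neg_smul]
    congr 2
    ring
  calc qint (m + 1) • qSerreSum v E x (m + 1) c = ∑ r ∈ range (m + 2), (a r + b r) • t r := by
        rw [qSerreSum, smul_sum]
        exact sum_congr rfl fun r hr => by rw [hcoeff r hr, smul_smul]
    _ = ∑ r ∈ range (m + 1), (a r • t r + b (r + 1) • t (r + 1)) := by
        simp only [add_smul, sum_add_distrib]
        rw [sum_range_succ (fun r => a r • t r), sum_range_succ' (fun r => b r • t r)]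
        simp [a, b, qint_zero]
    _ = qSerreSum v E (qAd v E (c + m) x) m (c - 1) := (sum_congr rfl hterm).symm

theorem qSerreSum_eq_qAdChain {v : Qq} (hv : v = 𝐪 ∨ v = 𝐪⁻¹) (E x : A) (m : ℕ) (c : ℤ) :
    qSerreSum v E x m c = (qfact m)⁻¹ • qAdChain v E m (c + m - 1) x := by
  induction m generalizing c x with
  | zero => simp [qSerreSum, dp_zero, qfact, qAdChain]
  | succ m ih =>
    have hm := qint_ne_zero m.succ_ne_zero
    rw [← inv_smul_smul₀ hm (qSerreSum v E x (m + 1) c), qint_smul_qSerreSum_succ hv, ih,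
      show c - 1 + m - 1 = c + m - 2 by ring,
      show c + ((m + 1 : ℕ) : ℤ) - 1 = c + m by push_cast; ring, qfact, qAdChain,
      LinearMap.comp_apply, smul_smul, ← mul_inv, mul_comm]

theorem qSerreSum_dp_eq_zero {v : Qq} (hv : v = 𝐪 ∨ v = 𝐪⁻¹) {E1 E2 : A}
    (hs1 : E1 ^ 2 * E2 + E2 * E1 ^ 2 = qint 2 • (E1 * E2 * E1))
    (hs2 : E2 ^ 2 * E1 + E1 * E2 ^ 2 = qint 2 • (E2 * E1 * E2)) {m n : ℕ} (hnm : n < m) :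
    qSerreSum v E1 (dp E2 n) m (n + 1 - m) = 0 := by
  have hq2 : qint 2 = v + v⁻¹ := by
    simpa [qint, add_comm] using qint_add_of_eq_or hv 1 1
  rw [hq2] at hs1 hs2
  rw [qSerreSum_eq_qAdChain hv, dp, map_smul, show (n : ℤ) + 1 - m + m - 1 = n by ring,
    qAdChain_pow_eq_zero_of_serre (ne_zero_of_eq_or hv) hs1 hs2 hnm, smul_zero, smul_zero]

end Algebra

theorem stmt_2_general (A : Type*) [Ring A] [Algebra Qq A] (E1 E2 : A)
    (hs1 : E1 ^ 2 * E2 + E2 * E1 ^ 2 = qint 2 • (E1 * E2 * E1))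
    (hs2 : E2 ^ 2 * E1 + E1 * E2 ^ 2 = qint 2 • (E2 * E1 * E2))
    (m n : ℕ) (hm : n < m) (ε : ℤ) (hε : ε = 1 ∨ ε = -1) :
    (∑ r ∈ Finset.range (m + 1),
        ((-1 : Qq) ^ r * (RatFunc.X : Qq) ^ (ε * ((m : ℤ) - (n : ℤ) - 1) * (r : ℤ))) •
          (dp E1 (m - r) * dp E2 n * dp E1 r) = 0) ∧
    (∑ r ∈ Finset.range (m + 1),
        ((-1 : Qq) ^ r * (RatFunc.X : Qq) ^ (ε * ((m : ℤ) - (n : ℤ) - 1) * (r : ℤ))) •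
          (dp E2 (m - r) * dp E1 n * dp E2 r) = 0) := by
  have hv : 𝐪 ^ (-ε) = 𝐪 ∨ 𝐪 ^ (-ε) = 𝐪⁻¹ := by
    rcases hε with rfl | rfl <;> simp
  have hcoeff : ∀ r : ℕ,
      𝐪 ^ (ε * ((m : ℤ) - n - 1) * r) = (𝐪 ^ (-ε)) ^ (((n : ℤ) + 1 - m) * r) := by
    intro r
    rw [← zpow_mul]
    ring_nf
  simp only [hcoeff]
  exact ⟨qSerreSum_dp_eq_zero hv hs1 hs2 hm, qSerreSum_dp_eq_zero hv hs2 hs1 hm⟩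

/-- higher quantum Serre relations: for m > n > 0 and ε ∈ {1,-1},
∑_{r=0}^{m} (−1)^r q^{ε(m−n−1)r} E1^{(m−r)} E2^{(n)} E1^{(r)} = 0,
and the same with E1 and E2 interchanged. -/
theorem stmt_2 (A : Type*) [Ring A] [Algebra Qq A] (E1 E2 : A)
    (hs1 : E1 ^ 2 * E2 + E2 * E1 ^ 2 = qint 2 • (E1 * E2 * E1))
    (hs2 : E2 ^ 2 * E1 + E1 * E2 ^ 2 = qint 2 • (E2 * E1 * E2))
    (m n : ℕ) (hn : 0 < n) (hm : n < m) (ε : ℤ) (hε : ε = 1 ∨ ε = -1) :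
    (∑ r ∈ Finset.range (m + 1),
        ((-1 : Qq) ^ r * (RatFunc.X : Qq) ^ (ε * ((m : ℤ) - (n : ℤ) - 1) * (r : ℤ))) •
          (dp E1 (m - r) * dp E2 n * dp E1 r) = 0) ∧
    (∑ r ∈ Finset.range (m + 1),
        ((-1 : Qq) ^ r * (RatFunc.X : Qq) ^ (ε * ((m : ℤ) - (n : ℤ) - 1) * (r : ℤ))) •
          (dp E2 (m - r) * dp E1 n * dp E2 r) = 0) :=
  stmt_2_general A E1 E2 hs1 hs2 m n hm ε hε
end
end
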